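/- arXiv:2501.13487 — 3 statements merged into one kernel-verified Lean document; each statement's English description precedes it below -/
import Mathlib

section
/- Let σ ≥ 1, t > 0, and let g : (0,∞) → [0,∞) be non-increasing. With ν_j = ((1/4 + j)π/t)^(1/σ) and μ_j = ((3/4 + j)π/t)^(1/σ), one has ∫_{ν_j}^{μ_j} g(r) dr ≥ (1/2) ∫_{ν_j}^{ν_{j+1}} g(r) dr for every j ∈ ℕ, and consequently ∑_{j=0}^{∞} ∫_{ν_j}^{μ_j} g(r) dr ≥ (1/2) ∫_{ν_0}^{∞} g(r) dr. -/
open Real MeasureTheory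

/-- Midpoint concavity of `x ^ p` for `0 ≤ p ≤ 1`. -/
lemma fs_rpow_midpoint (p a h : ℝ) (hp0 : 0 ≤ p) (hp1 : p ≤ 1)
    (ha : 0 ≤ a) (hh : 0 ≤ h) :
    (a + 2 * h) ^ p - (a + h) ^ p ≤ (a + h) ^ p - a ^ p := by
  have hc := (Real.concaveOn_rpow hp0 hp1).2 (Set.mem_Ici.2 ha)
    (Set.mem_Ici.2 (by linarith : (0:ℝ) ≤ a + 2 * h))
    (by norm_num : (0:ℝ) ≤ (1:ℝ)/2) (by norm_num : (0:ℝ) ≤ (1:ℝ)/2) (by norm_num)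
  simp only [smul_eq_mul] at hc
  have he : (1/2 : ℝ) * a + (1/2 : ℝ) * (a + 2 * h) = a + h := by ring
  rw [he] at hc
  linarith

theorem fourier_splitting_half_integral
    (σ t : ℝ) (hσ : 1 ≤ σ) (ht : 0 < t)
    (g : ℝ → ℝ) (hg_nonneg : ∀ r, 0 < r → 0 ≤ g r)
    (hg_mono : AntitoneOn g (Set.Ioi 0))
    (hg_int : IntegrableOn g (Set.Ioi ((π / (4 * t)) ^ (1 / σ))))
    (ν μ : ℕ → ℝ)
    (hν : ∀ j : ℕ, ν j = ((1 / 4 + (j : ℝ)) * π / t) ^ (1 / σ))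
    (hμ : ∀ j : ℕ, μ j = ((3 / 4 + (j : ℝ)) * π / t) ^ (1 / σ)) :
    (∀ j : ℕ, (∫ r in ν j..μ j, g r) ≥ (1 / 2) * ∫ r in ν j..ν (j + 1), g r) ∧
    (∑' j : ℕ, ∫ r in ν j..μ j, g r) ≥ (1 / 2) * ∫ r in Set.Ioi (ν 0), g r := by
  have hσ0 : 0 < σ := lt_of_lt_of_le one_pos hσ
  set p : ℝ := 1 / σ with hp
  have hp0 : 0 < p := by positivity
  have hp1 : p ≤ 1 := by
    rw [hp, div_le_one hσ0]; linarith
  have hπ : (0:ℝ) < π := Real.pi_pos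
  -- basic positivity of the bases
  have hbase : ∀ j : ℕ, (0:ℝ) < (1 / 4 + (j : ℝ)) * π / t := by
    intro j
    have : (0:ℝ) < 1 / 4 + (j : ℝ) := by positivity
    positivity
  have hν0 : ν 0 = (π / (4 * t)) ^ p := by
    rw [hν 0]; norm_num; ring_nf
  have hνpos : ∀ j, 0 < ν j := by
    intro j; rw [hν j]; exact Real.rpow_pos_of_pos (hbase j) p
  -- ν j ≤ μ j ≤ ν (j+1)
  have hbase_le : ∀ j : ℕ, (1 / 4 + (j : ℝ)) * π / t ≤ (3 / 4 + (j : ℝ)) * π / t := by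
    intro j
    gcongr ?_ / t
    nlinarith
  have hνμ : ∀ j, ν j ≤ μ j := by
    intro j
    rw [hν j, hμ j]
    refine Real.rpow_le_rpow (hbase j).le ?_ hp0.le
    gcongr ?_ / t
    nlinarith
  have hμν : ∀ j, μ j ≤ ν (j + 1) := by
    intro j
    rw [hν (j+1), hμ j]
    refine Real.rpow_le_rpow (by positivity) ?_ hp0.le
    push_cast
    gcongr ?_ / t
    nlinarith
  -- monotone ν
  have hνmono : Monotone ν := by
    apply monotone_nat_of_le_succ
    intro n
    exact (hνμ n).trans (hμν n)
  -- key length inequality : ν (j+1) - μ j ≤ μ j - ν j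
  have hlen : ∀ j, ν (j + 1) - μ j ≤ μ j - ν j := by
    intro j
    rw [hν j, hν (j+1), hμ j]
    have h2 : (0:ℝ) ≤ π / (2 * t) := by positivity
    have e1 : (3 / 4 + (j : ℝ)) * π / t = (1 / 4 + (j : ℝ)) * π / t + π / (2 * t) := by
      field_simp; ring
    have e2 : (1 / 4 + ((j : ℝ) + 1)) * π / t
        = (1 / 4 + (j : ℝ)) * π / t + 2 * (π / (2 * t)) := by
      field_simp; ring
    push_cast
    rw [e1, e2]
    have := fs_rpow_midpoint p ((1 / 4 + (j : ℝ)) * π / t) (π / (2 * t))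
      hp0.le hp1 (hbase j).le h2
    linarith
  -- integrability on subintervals
  have hsub : ∀ j k : ℕ, Set.Ioc (ν j) (ν k) ⊆ Set.Ioi (ν 0) := by
    intro j k x hx
    exact lt_of_le_of_lt (hνmono (Nat.zero_le j)) hx.1
  have hν0' : (π / (4 * t)) ^ (1 / σ) = ν 0 := by rw [hν0]
  have hint : ∀ a b : ℝ, ν 0 ≤ a → IntervalIntegrable g volume a b → True := fun _ _ _ _ => trivial
  have hIntOn : ∀ j k : ℕ, IntegrableOn g (Set.Ioc (ν j) (ν k)) := by
    intro j k
    apply hg_int.mono_set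
    rw [hν0']
    exact hsub j k
  have hII : ∀ j k : ℕ, j ≤ k → IntervalIntegrable g volume (ν j) (ν k) := by
    intro j k hjk
    rw [intervalIntegrable_iff, Set.uIoc_of_le (hνmono hjk)]
    exact hIntOn j k
  have hIIμ : ∀ j : ℕ, IntervalIntegrable g volume (ν j) (μ j) := by
    intro j
    rw [intervalIntegrable_iff, Set.uIoc_of_le (hνμ j)]
    exact (hIntOn j (j+1)).mono_set (Set.Ioc_subset_Ioc le_rfl (hμν j))
  have hIIμν : ∀ j : ℕ, IntervalIntegrable g volume (μ j) (ν (j+1)) := by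
    intro j
    rw [intervalIntegrable_iff, Set.uIoc_of_le (hμν j)]
    exact (hIntOn j (j+1)).mono_set (Set.Ioc_subset_Ioc (hνμ j) le_rfl)
  -- first part
  have part1 : ∀ j : ℕ, (∫ r in ν j..μ j, g r) ≥ (1 / 2) * ∫ r in ν j..ν (j + 1), g r := by
    intro j
    have hμpos : 0 < μ j := lt_of_lt_of_le (hνpos j) (hνμ j)
    have hA : (∫ r in μ j..ν (j+1), g r) ≤ g (μ j) * (ν (j+1) - μ j) := by
      have : (∫ r in μ j..ν (j+1), g r) ≤ ∫ _r in μ j..ν (j+1), g (μ j) := by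
        apply intervalIntegral.integral_mono_on (hμν j) (hIIμν j) intervalIntegrable_const
        intro x hx
        exact hg_mono (Set.mem_Ioi.2 hμpos) (Set.mem_Ioi.2 (lt_of_lt_of_le hμpos hx.1)) hx.1
      simpa [mul_comm] using this
    have hB : g (μ j) * (μ j - ν j) ≤ ∫ r in ν j..μ j, g r := by
      have : (∫ _r in ν j..μ j, g (μ j)) ≤ ∫ r in ν j..μ j, g r := by
        apply intervalIntegral.integral_mono_on (hνμ j) intervalIntegrable_const (hIIμ j)
        intro x hx
        exact hg_mono (Set.mem_Ioi.2 (lt_of_lt_of_le (hνpos j) hx.1))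
          (Set.mem_Ioi.2 hμpos) hx.2
      simpa [mul_comm] using this
    have hgμ : 0 ≤ g (μ j) := hg_nonneg _ hμpos
    have hC : (∫ r in μ j..ν (j+1), g r) ≤ ∫ r in ν j..μ j, g r := by
      calc (∫ r in μ j..ν (j+1), g r) ≤ g (μ j) * (ν (j+1) - μ j) := hA
        _ ≤ g (μ j) * (μ j - ν j) := by
            apply mul_le_mul_of_nonneg_left (hlen j) hgμ
        _ ≤ _ := hB
    have hsplit : (∫ r in ν j..ν (j+1), g r)
        = (∫ r in ν j..μ j, g r) + ∫ r in μ j..ν (j+1), g r :=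
      (intervalIntegral.integral_add_adjacent_intervals (hIIμ j) (hIIμν j)).symm
    rw [ge_iff_le, hsplit]
    linarith
  refine ⟨part1, ?_⟩
  -- second part
  -- the union of consecutive Ioc's is Ioi (ν 0)
  have hν_tendsto : Filter.Tendsto ν Filter.atTop Filter.atTop := by
    have hc : Filter.Tendsto (fun j : ℕ => (1 / 4 + (j : ℝ)) * π / t) Filter.atTop Filter.atTop := by
      apply Filter.Tendsto.atTop_div_const ht
      apply Filter.Tendsto.atTop_mul_const hπ
      exact Filter.tendsto_atTop_add_const_left _ _ tendsto_natCast_atTop_atTop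
    have := (tendsto_rpow_atTop hp0).comp hc
    apply this.congr
    intro j; simp [hν j]
  have hUnion : (⋃ j : ℕ, Set.Ioc (ν j) (ν (j+1))) = Set.Ioi (ν 0) := by
    apply Set.Subset.antisymm
    · intro x hx
      rcases Set.mem_iUnion.1 hx with ⟨j, hj⟩
      exact lt_of_le_of_lt (hνmono (Nat.zero_le j)) hj.1
    · intro x hx
      have hex : ∃ n, x ≤ ν n := by
        rcases (hν_tendsto.eventually_ge_atTop x).exists with ⟨n, hn⟩
        exact ⟨n, hn⟩
      classical
      let N := Nat.find hex
      have hN : x ≤ ν N := Nat.find_spec hex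
      have hN0 : N ≠ 0 := by
        intro h0
        have := hN
        rw [h0] at this
        exact absurd hx (not_lt.2 this)
      obtain ⟨m, hm⟩ := Nat.exists_eq_succ_of_ne_zero hN0
      have hmlt : ¬ x ≤ ν m := Nat.find_min hex (by omega)
      refine Set.mem_iUnion.2 ⟨m, ⟨not_le.1 hmlt, ?_⟩⟩
      rw [← Nat.succ_eq_add_one, ← hm]
      exact hN
  have hdisj : Pairwise (Function.onFun Disjoint fun j : ℕ => Set.Ioc (ν j) (ν (j+1)))  := by
    intro i j hij
    rcases lt_or_gt_of_ne hij with h | h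
    · exact Set.Ioc_disjoint_Ioc.2 ((min_le_left _ _).trans
        ((hνmono (by omega : i + 1 ≤ j)).trans (le_max_right _ _)))
    · exact Set.Ioc_disjoint_Ioc.2 ((min_le_right _ _).trans
        ((hνmono (by omega : j + 1 ≤ i)).trans (le_max_left _ _)))
  have hIntU : IntegrableOn g (⋃ j : ℕ, Set.Ioc (ν j) (ν (j+1))) := by
    rw [hUnion]
    rw [hν0'] at hg_int
    exact hg_int
  have hHasSum : HasSum (fun j : ℕ => ∫ r in Set.Ioc (ν j) (ν (j+1)), g r)
      (∫ r in Set.Ioi (ν 0), g r) := by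
    have := MeasureTheory.hasSum_integral_iUnion (fun j : ℕ => measurableSet_Ioc)
      hdisj hIntU
    rwa [hUnion] at this
  -- set-integral versions
  have hIval : ∀ j : ℕ, (∫ r in ν j..ν (j+1), g r) = ∫ r in Set.Ioc (ν j) (ν (j+1)), g r := by
    intro j
    rw [intervalIntegral.integral_of_le ((hνμ j).trans (hμν j))]
  have hJnonneg : ∀ j : ℕ, 0 ≤ ∫ r in ν j..μ j, g r := by
    intro j
    apply intervalIntegral.integral_nonneg (hνμ j)
    intro u hu
    exact hg_nonneg u (lt_of_lt_of_le (hνpos j) hu.1)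
  have hJleI : ∀ j : ℕ, (∫ r in ν j..μ j, g r) ≤ ∫ r in ν j..ν (j+1), g r := by
    intro j
    have h2 : 0 ≤ ∫ r in μ j..ν (j+1), g r := by
      apply intervalIntegral.integral_nonneg (hμν j)
      intro u hu
      exact hg_nonneg u (lt_of_lt_of_le (lt_of_lt_of_le (hνpos j) (hνμ j)) hu.1)
    have hsplit : (∫ r in ν j..ν (j+1), g r)
        = (∫ r in ν j..μ j, g r) + ∫ r in μ j..ν (j+1), g r :=
      (intervalIntegral.integral_add_adjacent_intervals (hIIμ j) (hIIμν j)).symm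
    linarith
  have hIsummable : Summable (fun j : ℕ => ∫ r in ν j..ν (j+1), g r) := by
    apply Summable.congr hHasSum.summable
    intro j
    exact (hIval j).symm
  have hJsummable : Summable (fun j : ℕ => ∫ r in ν j..μ j, g r) :=
    Summable.of_nonneg_of_le hJnonneg hJleI hIsummable
  have hIsum : (∑' j : ℕ, ∫ r in ν j..ν (j+1), g r) = ∫ r in Set.Ioi (ν 0), g r := by
    rw [tsum_congr hIval]
    exact hHasSum.tsum_eq
  calc (1 / 2 : ℝ) * ∫ r in Set.Ioi (ν 0), g r
      = ∑' j : ℕ, (1/2 : ℝ) * ∫ r in ν j..ν (j+1), g r := by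
        rw [tsum_mul_left, hIsum]
    _ ≤ ∑' j : ℕ, ∫ r in ν j..μ j, g r := by
        apply Summable.tsum_le_tsum _ (hIsummable.mul_left _) hJsummable
        intro j
        exact part1 j
end

section
/- Let σ ≥ 1 and ε ∈ (0, 2). Then for all sufficiently large t, ∑_{j=0}^{∞} ∫_{r ∈ [ν_0, 1] ∩ [ν_j, μ_j]} r^{−2σ−1+σε} dr ≥ c t^{2−ε} for some constant c > 0 independent of t, where ν_j = ((1/4+j)π/t)^{1/σ} and μ_j = ((3/4+j)π/t)^{1/σ}. -/
open Real MeasureTheory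

theorem L2_data_polynomial_growth_lower_bound
    (σ ε : ℝ) (hσ : 1 ≤ σ) (hε : ε ∈ Set.Ioo (0 : ℝ) 2) :
    ∃ c > (0 : ℝ), ∃ T : ℝ, ∀ t : ℝ, T ≤ t →
      (∑' j : ℕ,
          ∫ r in Set.Icc (((1 / 4 + (0 : ℕ) : ℝ) * π / t) ^ (1 / σ)) 1 ∩
              Set.Icc (((1 / 4 + (j : ℝ)) * π / t) ^ (1 / σ))
                (((3 / 4 + (j : ℝ)) * π / t) ^ (1 / σ)),
            r ^ (-2 * σ - 1 + σ * ε)) ≥ c * t ^ (2 - ε) := by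
  obtain ⟨hε0, hε2⟩ := hε
  have hσ0 : (0 : ℝ) < σ := lt_of_lt_of_le one_pos hσ
  have hπ : (0 : ℝ) < π := pi_pos
  set α : ℝ := -2 * σ - 1 + σ * ε with hαdef
  have hα1 : α + 1 = σ * (ε - 2) := by rw [hαdef]; ring
  have hα1neg : α + 1 < 0 := by
    rw [hα1]; exact mul_neg_of_pos_of_neg hσ0 (by linarith)
  have hαne : α ≠ -1 := by intro h; rw [h] at hα1neg; norm_num at hα1neg
  have hcpos : (0 : ℝ) < ((π / 4) ^ (ε - 2) - (3 * π / 4) ^ (ε - 2)) / (σ * (2 - ε)) := by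
    apply div_pos _ (mul_pos hσ0 (by linarith))
    have h1 : (3 * π / 4 : ℝ) ^ (ε - 2) < (π / 4) ^ (ε - 2) :=
      Real.rpow_lt_rpow_of_neg (by positivity) (by linarith) (by linarith)
    linarith
  refine ⟨((π / 4) ^ (ε - 2) - (3 * π / 4) ^ (ε - 2)) / (σ * (2 - ε)), hcpos, 4, ?_⟩
  intro t ht
  have ht0 : (0 : ℝ) < t := by linarith
  set a : ℕ → ℝ := fun j => ((1 / 4 + (j : ℝ)) * π / t) ^ (1 / σ) with hadef
  set b : ℕ → ℝ := fun j => ((3 / 4 + (j : ℝ)) * π / t) ^ (1 / σ) with hbdef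
  have hbase_pos : ∀ j : ℕ, (0 : ℝ) < (1 / 4 + (j : ℝ)) * π / t := by
    intro j; positivity
  have ha_pos : ∀ j, 0 < a j := fun j => Real.rpow_pos_of_pos (hbase_pos j) _
  have hb_pos : ∀ j, 0 < b j := fun j => Real.rpow_pos_of_pos (by positivity) _
  have hab : ∀ j, a j ≤ b j := by
    intro j
    apply Real.rpow_le_rpow (hbase_pos j).le _ (by positivity)
    gcongr
    linarith
  have hba : ∀ i j : ℕ, i < j → b i < a j := by
    intro i j hij
    apply Real.rpow_lt_rpow (by positivity) _ (by positivity)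
    have hij' : (i : ℝ) + 1 ≤ (j : ℝ) := by exact_mod_cast hij
    have hlt : (3 / 4 + (i : ℝ)) * π < (1 / 4 + (j : ℝ)) * π :=
      mul_lt_mul_of_pos_right (by linarith) hπ
    exact (div_lt_div_iff_of_pos_right ht0).mpr hlt
  set S : ℕ → Set ℝ := fun j => Set.Icc (a 0) 1 ∩ Set.Icc (a j) (b j) with hSdef
  have hSm : ∀ j, MeasurableSet (S j) := fun j =>
    measurableSet_Icc.inter measurableSet_Icc
  have hSd : Pairwise (Function.onFun Disjoint S) := by
    have key : ∀ i j : ℕ, i < j → Disjoint (S i) (S j) := by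
      intro i j hij
      apply Set.disjoint_left.mpr
      rintro x ⟨-, -, hx2⟩ ⟨-, hx3, -⟩
      exact absurd (hx2.trans_lt (hba i j hij)) (not_lt.mpr hx3)
    intro i j hij
    rcases hij.lt_or_gt with h | h
    · exact key i j h
    · exact (key j i h).symm
  have hsub : (⋃ j, S j) ⊆ Set.Icc (a 0) 1 :=
    Set.iUnion_subset fun j => Set.inter_subset_left
  have hInt1 : IntegrableOn (fun r : ℝ => r ^ α) (Set.Icc (a 0) 1) := by
    apply ContinuousOn.integrableOn_Icc
    intro x hx
    exact (Real.continuousAt_rpow_const x α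
      (Or.inl (ne_of_gt (lt_of_lt_of_le (ha_pos 0) hx.1)))).continuousWithinAt
  have hIntU : IntegrableOn (fun r : ℝ => r ^ α) (⋃ j, S j) := hInt1.mono_set hsub
  have hkey : ∫ r in ⋃ j, S j, r ^ α = ∑' j : ℕ, ∫ r in S j, r ^ α :=
    integral_iUnion hSm hSd hIntU
  have hb0le1 : b 0 ≤ 1 := by
    apply Real.rpow_le_one (by positivity) _ (by positivity)
    rw [div_le_one ht0]
    nlinarith [Real.pi_lt_d2]
  have hS0 : S 0 = Set.Icc (a 0) (b 0) := by
    rw [hSdef]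
    exact Set.inter_eq_right.mpr (Set.Icc_subset_Icc_right hb0le1)
  have hmono : ∫ r in S 0, (r : ℝ) ^ α ≤ ∫ r in ⋃ j, S j, r ^ α := by
    apply setIntegral_mono_set hIntU
    · refine (ae_restrict_iff' (MeasurableSet.iUnion hSm)).mpr (ae_of_all _ fun x hx => ?_)
      exact Real.rpow_nonneg (le_of_lt (lt_of_lt_of_le (ha_pos 0) (hsub hx).1)) _
    · exact HasSubset.Subset.eventuallyLE (Set.subset_iUnion S 0)
  have hpow : ∀ K : ℝ, 0 < K → ((K / t) ^ (1 / σ)) ^ (α + 1) = K ^ (ε - 2) * t ^ (2 - ε) := by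
    intro K hK
    have hexp : (1 / σ) * (α + 1) = ε - 2 := by
      rw [hα1]; field_simp
    rw [← Real.rpow_mul (by positivity : (0 : ℝ) ≤ K / t), hexp,
      Real.div_rpow hK.le ht0.le, div_eq_mul_inv, ← Real.rpow_neg ht0.le]
    have h2 : -(ε - 2) = 2 - ε := by ring
    rw [h2]
  have ea : a 0 = ((π / 4) / t) ^ (1 / σ) := by
    rw [hadef]
    norm_num
    ring_nf
  have eb : b 0 = ((3 * π / 4) / t) ^ (1 / σ) := by
    rw [hbdef]
    norm_num
    ring_nf
  have hval : (∫ r in Set.Icc (a 0) (b 0), (r : ℝ) ^ α)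
      = ((π / 4) ^ (ε - 2) - (3 * π / 4) ^ (ε - 2)) / (σ * (2 - ε)) * t ^ (2 - ε) := by
    rw [MeasureTheory.integral_Icc_eq_integral_Ioc,
      ← intervalIntegral.integral_of_le (hab 0),
      integral_rpow (Or.inr ⟨hαne, Set.notMem_uIcc_of_lt (ha_pos 0) (hb_pos 0)⟩),
      ea, eb, hpow _ (by positivity), hpow _ (by positivity), hα1]
    have hne1 : σ * (ε - 2) ≠ 0 := by
      intro h; rcases mul_eq_zero.mp h with h | h
      · exact hσ0.ne' h
      · linarith
    have hne2 : σ * (2 - ε) ≠ 0 := (mul_pos hσ0 (by linarith)).ne'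
    rw [div_mul_eq_mul_div, div_eq_div_iff hne1 hne2]
    ring
  show (∑' j : ℕ, ∫ r in S j, r ^ α) ≥ _
  calc (∑' j : ℕ, ∫ r in S j, r ^ α)
      = ∫ r in ⋃ j, S j, r ^ α := hkey.symm
    _ ≥ ∫ r in S 0, (r : ℝ) ^ α := hmono
    _ = ((π / 4) ^ (ε - 2) - (3 * π / 4) ^ (ε - 2)) / (σ * (2 - ε)) * t ^ (2 - ε) := by
        rw [hS0]; exact hval
end

section
/- Let n ≥ 1, s ≥ n/2, σ ≥ 1, and fix t₀ > 0 and ε₁ > 0 with ε₁^σ t₀ < 1. Then ∫_{ε₀ ≤ |ξ| ≤ ε₁} |sin(|ξ|^σ t₀)|² |ξ|^{−2σ−2s} dξ ≥ (t₀²/4) ω_n ∫_{ε₀}^{ε₁} r^{n−1−2s} dr, and the right-hand side tends to +∞ as ε₀ → 0⁺. -/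
/-!
On the annulus, `x = ‖ξ‖ ^ σ * t₀` lies in `[0, 1]`, so Jordan's inequality `sin x ≥ (2 / π) x ≥ x / 2`
bounds the integrand below by `(t₀² / 4) ‖ξ‖ ^ (-2s)`, and polar coordinates turn its integral into
`ω_n ∫ r ^ (n - 1 - 2s) dr`. Since `n - 1 - 2s ≤ -1`, on `(0, ε₁]` this radial integrand dominates
`ε₁ ^ (n - 2s) / r`, whose integral over `[ε₀, ε₁]` is a positive multiple of `log (ε₁ / ε₀)`.
-/

open Real MeasureTheory Filter Set Metric Module Topology Interval

theorem half_le_sin {x : ℝ} (hx₀ : 0 ≤ x) (hx : x ≤ π / 2) : x / 2 ≤ sin x := by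
  have hπ : 1 / 2 ≤ 2 / π := by rw [div_le_div_iff₀ two_pos pi_pos]; linarith [pi_le_four]
  calc x / 2 = 1 / 2 * x := by ring
    _ ≤ 2 / π * x := mul_le_mul_of_nonneg_right hπ hx₀
    _ ≤ sin x := mul_le_sin hx₀ hx

theorem sq_div_four_mul_rpow_le_sin_sq_mul_rpow {r σ s t : ℝ} (hr : 0 < r) (ht : 0 ≤ t)
    (hsmall : r ^ σ * t ≤ 1) :
    t ^ 2 / 4 * r ^ (-2 * s) ≤ |sin (r ^ σ * t)| ^ 2 * r ^ (-2 * σ - 2 * s) := by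
  set x := r ^ σ * t
  have hx₀ : 0 ≤ x := mul_nonneg (rpow_nonneg hr.le σ) ht
  have hsin : x / 2 ≤ |sin x| :=
    (half_le_sin hx₀ (hsmall.trans (by linarith [pi_gt_three]))).trans (le_abs_self _)
  have hpow : (r ^ σ) ^ 2 * r ^ (-2 * σ - 2 * s) = r ^ (-2 * s) := by
    rw [← rpow_mul_natCast hr.le, ← rpow_add hr]
    ring_nf
  calc t ^ 2 / 4 * r ^ (-2 * s) = (x / 2) ^ 2 * r ^ (-2 * σ - 2 * s) := by
        rw [← hpow]; ring
    _ ≤ |sin x| ^ 2 * r ^ (-2 * σ - 2 * s) := by gcongr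

theorem tendsto_intervalIntegral_rpow_nhdsGT_zero {p b : ℝ} (hp : p ≤ -1) (hb : 0 < b) :
    Tendsto (fun a => ∫ r in a..b, r ^ p) (𝓝[>] 0) atTop := by
  have hlog : Tendsto (fun a => b ^ (p + 1) * log (b / a)) (𝓝[>] 0) atTop := by
    simp only [div_eq_mul_inv]
    exact (tendsto_log_atTop.comp (tendsto_inv_nhdsGT_zero.const_mul_atTop hb)).const_mul_atTop
      (rpow_pos_of_pos hb _)
  refine tendsto_atTop_mono' _ ?_ hlog
  filter_upwards [Ioo_mem_nhdsGT hb] with a ⟨ha, hab⟩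
  have h0 : (0 : ℝ) ∉ [[a, b]] := by
    rw [uIcc_of_le hab.le]
    exact fun h => ha.not_ge h.1
  calc b ^ (p + 1) * log (b / a) = ∫ r in a..b, b ^ (p + 1) * r⁻¹ := by
        rw [intervalIntegral.integral_const_mul, integral_inv_of_pos ha hb]
    _ ≤ ∫ r in a..b, r ^ p := by
      refine intervalIntegral.integral_mono_on hab.le
        ((intervalIntegrable_inv_iff.2 (Or.inr h0)).const_mul _)
        (intervalIntegral.intervalIntegrable_rpow (Or.inr h0)) fun r hr => ?_
      have hr₀ : 0 < r := ha.trans_le hr.1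
      calc b ^ (p + 1) * r⁻¹ ≤ r ^ (p + 1) * r⁻¹ :=
            mul_le_mul_of_nonneg_right (rpow_le_rpow_of_nonpos hr₀ hr.2 (by linarith))
              (inv_nonneg.2 hr₀.le)
        _ = r ^ p := by rw [rpow_add_one hr₀.ne']; field_simp

section Annulus

variable {E : Type*} [NormedAddCommGroup E] [NormedSpace ℝ E] [FiniteDimensional ℝ E]
  [MeasurableSpace E] [BorelSpace E]

omit [MeasurableSpace E] [BorelSpace E] in
theorem isCompact_annulus (a b : ℝ) : IsCompact {ξ : E | a ≤ ‖ξ‖ ∧ ‖ξ‖ ≤ b} :=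
  (isCompact_closedBall (0 : E) b).of_isClosed_subset
    ((isClosed_le continuous_const continuous_norm).inter
      (isClosed_le continuous_norm continuous_const))
    fun _ h => mem_closedBall_zero_iff.2 h.2

theorem integrableOn_annulus_fun_norm (μ : Measure E) [IsFiniteMeasureOnCompacts μ]
    {f : ℝ → ℝ} {a b : ℝ} (hf : ContinuousOn f (Icc a b)) :
    IntegrableOn (fun ξ => f ‖ξ‖) {ξ : E | a ≤ ‖ξ‖ ∧ ‖ξ‖ ≤ b} μ :=
  (hf.comp continuous_norm.continuousOn fun _ h => h).integrableOn_compact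
    (isCompact_annulus a b)

theorem setIntegral_annulus_fun_norm [Nontrivial E] (μ : Measure E) [μ.IsAddHaarMeasure]
    (f : ℝ → ℝ) {a b : ℝ} (ha : 0 < a) (hab : a ≤ b) :
    ∫ ξ in {ξ : E | a ≤ ‖ξ‖ ∧ ‖ξ‖ ≤ b}, f ‖ξ‖ ∂μ =
      finrank ℝ E * μ.real (ball 0 1) * ∫ r in a..b, r ^ (finrank ℝ E - 1) * f r := by
  have hpre : {ξ : E | a ≤ ‖ξ‖ ∧ ‖ξ‖ ≤ b} = (‖·‖) ⁻¹' Icc a b := rfl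
  have hind : (fun y : ℝ => y ^ (finrank ℝ E - 1) • (Icc a b).indicator f y) =
      (Icc a b).indicator fun y => y ^ (finrank ℝ E - 1) * f y := by
    ext y
    by_cases hy : y ∈ Icc a b <;> simp [hy]
  rw [hpre, ← integral_indicator (measurable_norm measurableSet_Icc)]
  change ∫ ξ, (Icc a b).indicator f ‖ξ‖ ∂μ = _
  rw [integral_fun_norm_addHaar, hind, setIntegral_indicator measurableSet_Icc,
    inter_eq_right.2 ((Icc_subset_Ioi_iff hab).2 ha), integral_Icc_eq_integral_Ioc,
    ← intervalIntegral.integral_of_le hab, nsmul_eq_mul, smul_eq_mul, mul_assoc]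

theorem setIntegral_annulus_norm_rpow [Nontrivial E] (μ : Measure E) [μ.IsAddHaarMeasure]
    (q : ℝ) {a b : ℝ} (ha : 0 < a) (hab : a ≤ b) :
    ∫ ξ in {ξ : E | a ≤ ‖ξ‖ ∧ ‖ξ‖ ≤ b}, ‖ξ‖ ^ q ∂μ =
      finrank ℝ E * μ.real (ball 0 1) * ∫ r in a..b, r ^ ((finrank ℝ E : ℝ) - 1 + q) := by
  rw [setIntegral_annulus_fun_norm μ (· ^ q) ha hab]
  congr 1
  refine intervalIntegral.integral_congr fun r hr => ?_
  have hr₀ : 0 < r := by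
    rw [uIcc_of_le hab] at hr
    exact ha.trans_le hr.1
  rw [← rpow_natCast, Nat.cast_sub finrank_pos, Nat.cast_one, rpow_add hr₀]

theorem le_setIntegral_annulus_sin_sq_mul_rpow [Nontrivial E] (μ : Measure E) [μ.IsAddHaarMeasure]
    {σ s t a b : ℝ} (hσ : 0 ≤ σ) (ht : 0 ≤ t) (hsmall : b ^ σ * t ≤ 1) (ha : 0 < a)
    (hab : a ≤ b) :
    t ^ 2 / 4 * (finrank ℝ E * μ.real (ball 0 1)) *
        ∫ r in a..b, r ^ ((finrank ℝ E : ℝ) - 1 - 2 * s) ≤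
      ∫ ξ in {ξ : E | a ≤ ‖ξ‖ ∧ ‖ξ‖ ≤ b}, |sin (‖ξ‖ ^ σ * t)| ^ 2 * ‖ξ‖ ^ (-2 * σ - 2 * s) ∂μ := by
  have hpos : ∀ r ∈ Icc a b, 0 < r := fun r hr => ha.trans_le hr.1
  have hcont : ∀ q : ℝ, ContinuousOn (fun r : ℝ => r ^ q) (Icc a b) := fun q =>
    continuousOn_id.rpow_const fun r hr => Or.inl (hpos r hr).ne'
  calc t ^ 2 / 4 * (finrank ℝ E * μ.real (ball 0 1)) *
        ∫ r in a..b, r ^ ((finrank ℝ E : ℝ) - 1 - 2 * s)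
      = ∫ ξ in {ξ : E | a ≤ ‖ξ‖ ∧ ‖ξ‖ ≤ b}, t ^ 2 / 4 * ‖ξ‖ ^ (-2 * s) ∂μ := by
        rw [integral_const_mul, setIntegral_annulus_norm_rpow μ _ ha hab, mul_assoc]
        ring_nf
    _ ≤ _ := by
      refine setIntegral_mono_on
        (integrableOn_annulus_fun_norm μ (continuousOn_const.mul (hcont _)))
        (integrableOn_annulus_fun_norm μ
          (f := fun r => |sin (r ^ σ * t)| ^ 2 * r ^ (-2 * σ - 2 * s))
          (((continuous_sin.comp_continuousOn ((hcont σ).mul continuousOn_const)).abs.pow 2).mul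
            (hcont _)))
        (isCompact_annulus a b).measurableSet fun ξ hξ =>
        sq_div_four_mul_rpow_le_sin_sq_mul_rpow (hpos _ hξ) ht
          (le_trans ?_ hsmall)
      exact mul_le_mul_of_nonneg_right (rpow_le_rpow (hpos _ hξ).le hξ.2 hσ) ht

end Annulus

theorem finite_time_blowup_mechanism
    (n : ℕ) (hn : 1 ≤ n) (σ s t₀ ε₁ : ℝ) (hσ : 1 ≤ σ) (hs : (n : ℝ) / 2 ≤ s)
    (ht₀ : 0 < t₀) (hε₁ : 0 < ε₁) (hsmall : ε₁ ^ σ * t₀ < 1)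
    (ωn : ℝ) (hω : ωn = n * (volume (Metric.ball (0 : EuclideanSpace ℝ (Fin n)) 1)).toReal) :
    (∀ ε₀ : ℝ, 0 < ε₀ → ε₀ < ε₁ →
      (∫ ξ in {ξ : EuclideanSpace ℝ (Fin n) | ε₀ ≤ ‖ξ‖ ∧ ‖ξ‖ ≤ ε₁},
          |Real.sin (‖ξ‖ ^ σ * t₀)| ^ 2 * ‖ξ‖ ^ (-2 * σ - 2 * s)) ≥
        (t₀ ^ 2 / 4) * ωn * ∫ r in ε₀..ε₁, r ^ ((n : ℝ) - 1 - 2 * s)) ∧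
    Tendsto (fun ε₀ : ℝ => (t₀ ^ 2 / 4) * ωn * ∫ r in ε₀..ε₁, r ^ ((n : ℝ) - 1 - 2 * s))
      (nhdsWithin 0 (Set.Ioi 0)) atTop := by
  have : Nontrivial (EuclideanSpace ℝ (Fin n)) :=
    nontrivial_of_finrank_pos (R := ℝ) (by rw [finrank_euclideanSpace_fin]; omega)
  have hω₀ : 0 < ωn := hω ▸ mul_pos (by exact_mod_cast hn)
    (ENNReal.toReal_pos (measure_ball_pos _ _ one_pos).ne' measure_ball_lt_top.ne)
  refine ⟨fun ε₀ hε₀ hε₀₁ => ?_, (tendsto_intervalIntegral_rpow_nhdsGT_zero (by linarith)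
    hε₁).const_mul_atTop (by positivity)⟩
  have h := le_setIntegral_annulus_sin_sq_mul_rpow (volume : Measure (EuclideanSpace ℝ (Fin n))) (s := s)
    (by linarith) ht₀.le hsmall.le hε₀ hε₀₁.le
  rwa [finrank_euclideanSpace_fin, measureReal_def, ← hω] at h
end
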